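/- Let G be a simple graph with vertex set V and v ∈ V. Then for all X ⊆ V, the rank over GF(2) of A(G^v)[X, V∖X] equals the rank of A(G)[X, V∖X], where G^v is the local complement of G at v. -/

import Mathlib

open Matrix
open scoped symmDiff

variable {V F : Type*} [Fintype V] [DecidableEq V] [Field F]

/-- Nullity of a matrix: dimension of the kernel of the associated linear map. -/
noncomputable def nullity {F : Type*} [Field F] {m n : Type*} [Fintype m] [Fintype n]
    (M : Matrix m n F) : ℕ :=
  Module.finrank F (LinearMap.ker M.mulVecLin)

/-- Submatrix A[X,Y]: rows indexed by X, columns by Y. -/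
def subm (A : Matrix V V F) (X Y : Finset V) : Matrix X Y F :=
  A.submatrix Subtype.val Subtype.val

/-- Principal pivot transform of A on Z, defined blockwise. -/
noncomputable def ppt (A : Matrix V V F) (Z : Finset V) : Matrix V V F :=
  fun i j =>
    if hi : i ∈ Z then
      if hj : j ∈ Z then (subm A Z Z)⁻¹ ⟨i, hi⟩ ⟨j, hj⟩
      else - ∑ k : Z, (subm A Z Z)⁻¹ ⟨i, hi⟩ k * A k j
    else
      if hj : j ∈ Z then ∑ k : Z, A i k * (subm A Z Z)⁻¹ k ⟨j, hj⟩
      else A i j - ∑ k : Z, ∑ l : Z, A i k * (subm A Z Z)⁻¹ k l * A l j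

/-- Local complement of a simple graph G at a vertex v: complement the subgraph
induced on the neighborhood of v. -/
def localComp {V : Type*} (G : SimpleGraph V) (v : V) : SimpleGraph V where
  Adj a b := a ≠ b ∧ Xor' (G.Adj a b) (G.Adj v a ∧ G.Adj v b)
  symm := by
    constructor
    rintro a b ⟨hne, h⟩
    refine ⟨hne.symm, ?_⟩
    rwa [G.adj_comm b a, and_comm]
  loopless := by constructor; rintro a ⟨h, -⟩; exact h rfl

instance {V : Type*} [DecidableEq V] (G : SimpleGraph V) [DecidableRel G.Adj] (v : V) :
    DecidableRel (localComp G v).Adj :=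
  fun a b => decidable_of_iff (a ≠ b ∧ ((G.Adj a b ∧ ¬(G.Adj v a ∧ G.Adj v b)) ∨
    ((G.Adj v a ∧ G.Adj v b) ∧ ¬G.Adj a b))) Iff.rfl

/-!
Over GF(2), for i ≠ j local complementation at v adds A_iv A_vj to the entry A_ij,
so A(G^v)[X, Xᶜ] = M + a bᵀ is a rank-one update of M = A(G)[X, Xᶜ]. If v ∈ X, then bᵀ is
row v of M and a_v = 0, so the new matrix is (1 + a e_vᵀ) M with
det (1 + a e_vᵀ) = 1 + a_v = 1; if v ∉ X, then a is column v of M and the new matrix is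
M (1 + e_v bᵀ). Either way M is multiplied by an invertible matrix, which preserves rank.
-/

namespace Matrix

variable {m n R : Type*} [Fintype n] [CommRing R]

theorem det_one_add_vecMulVec [DecidableEq n] (u w : n → R) :
    (1 + vecMulVec u w).det = 1 + w ⬝ᵥ u := by
  rw [vecMulVec_eq Unit, det_one_add_replicateCol_mul_replicateRow]

theorem rank_add_vecMulVec_mulVec [DecidableEq n] (M : Matrix m n R) (u w : n → R)
    (h : IsUnit (1 + w ⬝ᵥ u)) : (M + vecMulVec (M *ᵥ u) w).rank = M.rank := by
  rw [← mul_vecMulVec]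
  nth_rw 1 [← M.mul_one]
  rw [← Matrix.mul_add]
  exact rank_mul_eq_left_of_isUnit_det _ _ (by rwa [det_one_add_vecMulVec])

theorem rank_add_vecMulVec_vecMul [Fintype m] [DecidableEq m] (M : Matrix m n R) (u w : m → R)
    (h : IsUnit (1 + w ⬝ᵥ u)) : (M + vecMulVec u (w ᵥ* M)).rank = M.rank := by
  rw [← vecMulVec_mul]
  nth_rw 1 [← M.one_mul]
  rw [← Matrix.add_mul]
  exact rank_mul_eq_right_of_isUnit_det _ _ (by rwa [det_one_add_vecMulVec])

end Matrix

@[simp]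
theorem localComp_adj {V : Type*} (G : SimpleGraph V) (v a b : V) :
    (localComp G v).Adj a b ↔ a ≠ b ∧ Xor (G.Adj a b) (G.Adj v a ∧ G.Adj v b) :=
  Iff.rfl

theorem adjMatrix_localComp_apply_of_ne {V R : Type*} [DecidableEq V] [Ring R] [CharP R 2]
    (G : SimpleGraph V) [DecidableRel G.Adj] (v : V) {i j : V} (hij : i ≠ j) :
    (localComp G v).adjMatrix R i j =
      G.adjMatrix R i j + G.adjMatrix R i v * G.adjMatrix R v j := by
  by_cases h1 : G.Adj i j <;> by_cases h2 : G.Adj v i <;> by_cases h3 : G.Adj v j <;>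
    simp [SimpleGraph.adjMatrix_apply, hij, h1, h2, h3, G.adj_comm i v,
      CharTwo.add_self_eq_zero]

theorem subm_adjMatrix_localComp {V R : Type*} [DecidableEq V] [Ring R] [CharP R 2]
    (G : SimpleGraph V) [DecidableRel G.Adj] (v : V) {X Y : Finset V} (hXY : Disjoint X Y) :
    subm ((localComp G v).adjMatrix R) X Y =
      subm (G.adjMatrix R) X Y +
        vecMulVec (fun i : X => G.adjMatrix R i v) (fun j : Y => G.adjMatrix R v j) := by
  ext i j
  exact adjMatrix_localComp_apply_of_ne G v fun h => Finset.disjoint_left.1 hXY i.2 (h ▸ j.2)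

/-- The cut-rank over GF(2) is invariant under local complementation. -/
theorem cutRank_localComp {V : Type*} [Fintype V] [DecidableEq V]
    (G : SimpleGraph V) [DecidableRel G.Adj] (v : V) (X : Finset V) :
    (subm (SimpleGraph.adjMatrix (ZMod 2) (localComp G v)) X Xᶜ).rank =
    (subm (SimpleGraph.adjMatrix (ZMod 2) G) X Xᶜ).rank := by
  set M := subm (G.adjMatrix (ZMod 2)) X Xᶜ
  rw [subm_adjMatrix_localComp G v disjoint_compl_right]
  by_cases hv : v ∈ X
  · have hrow : (fun j : (Xᶜ : Finset V) => G.adjMatrix (ZMod 2) v j) =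
        Pi.single ⟨v, hv⟩ 1 ᵥ* M :=
      (single_one_vecMul (⟨v, hv⟩ : X) M).symm
    rw [hrow]
    exact M.rank_add_vecMulVec_vecMul _ _ (by simp)
  · have hv' : v ∈ Xᶜ := Finset.mem_compl.2 hv
    have hcol : (fun i : X => G.adjMatrix (ZMod 2) i v) = M *ᵥ Pi.single ⟨v, hv'⟩ 1 :=
      (mulVec_single_one M (⟨v, hv'⟩ : (Xᶜ : Finset V))).symm
    rw [hcol]
    exact M.rank_add_vecMulVec_mulVec _ _ (by simp)
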